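/- Let λ > 0, let x₁, x₂, …, x_t ∈ ℝ^N, and define V₀ = λI and Vᵢ = V_{i−1} + xᵢxᵢᵀ for i = 1,…,t. Then Σ_{i=1}^{t} min{1, xᵢᵀ V_{i−1}^{−1} xᵢ} ≤ 2·log(det(V_t)/det(λI)). -/

import Mathlib

open Matrix

/-! By the matrix determinant lemma, `det V_{i+1} = det V_i · (1 + q_i)` with
`q_i = xᵢᵀ V_i⁻¹ xᵢ ≥ 0`, so `log (det V_t / det V_0) = ∑ log (1 + q_i)`. The claim then follows
termwise from the scalar inequality `min 1 u ≤ 2u/(1+u) ≤ 2 log (1 + u)` for `u ≥ 0`. -/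

lemma min_one_le_two_mul_log_one_add {u : ℝ} (hu : 0 ≤ u) : min 1 u ≤ 2 * Real.log (1 + u) := by
  have hlog : u / (1 + u) ≤ Real.log (1 + u) :=
    calc u / (1 + u) = 1 - (1 + u)⁻¹ := by field_simp; ring
      _ ≤ Real.log (1 + u) := Real.one_sub_inv_le_log_of_pos (by positivity)
  have hmin : min 1 u ≤ 2 * (u / (1 + u)) := by
    rw [mul_div_assoc', le_div_iff₀ (by positivity)]
    rcases le_total u 1 with h | h
    · rw [min_eq_right h]; nlinarith
    · rw [min_eq_left h]; linarith
  linarith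

namespace Matrix

variable {n R : Type*} [Fintype n] [CommRing R]

theorem posDef_of_add_vecMulVec_self {V : ℕ → Matrix n n ℝ} {x : ℕ → n → ℝ}
    (hV : ∀ i, V (i + 1) = V i + vecMulVec (x i) (x i)) (h0 : (V 0).PosDef) (i : ℕ) :
    (V i).PosDef := by
  induction i with
  | zero => exact h0
  | succ i ih => rw [hV]; exact ih.add_posSemidef (posSemidef_vecMulVec_self_star (x i))

variable [DecidableEq n]

theorem det_add_vecMulVec {A : Matrix n n R} (hA : IsUnit A.det) (u v : n → R) :
    (A + vecMulVec u v).det = A.det * (1 + v ⬝ᵥ (A⁻¹ *ᵥ u)) := by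
  rw [vecMulVec_eq Unit, det_add_replicateCol_mul_replicateRow hA]
  congr 1
  rw [det_unique, add_apply, one_apply_eq, ← replicateRow_vecMul, replicateRow_mul_replicateCol_apply,
    dotProduct_mulVec]

theorem det_eq_mul_prod_of_add_vecMulVec {V : ℕ → Matrix n n R} {u v : ℕ → n → R}
    (hV : ∀ i, V (i + 1) = V i + vecMulVec (u i) (v i)) (hdet : ∀ i, IsUnit (V i).det) (t : ℕ) :
    (V t).det = (V 0).det * ∏ i ∈ Finset.range t, (1 + v i ⬝ᵥ ((V i)⁻¹ *ᵥ u i)) := by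
  induction t with
  | zero => simp
  | succ t ih => rw [hV, det_add_vecMulVec (hdet t), ih, Finset.prod_range_succ, mul_assoc]

end Matrix

/-- Let `λ > 0`, let `x₁, …, x_t ∈ ℝ^N`, and define `V₀ = λI` and
`Vᵢ = V_{i−1} + xᵢxᵢᵀ`. Then `∑_{i=1}^t min{1, xᵢᵀ V_{i−1}⁻¹ xᵢ} ≤ 2·log(det(V_t)/det(λI))`.
(Here `x 0, …, x (t-1)` play the roles of `x₁, …, x_t`.) -/
theorem statement3 {N : ℕ} (lam : ℝ) (hlam : 0 < lam) (t : ℕ) (x : ℕ → Fin N → ℝ)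
    (V : ℕ → Matrix (Fin N) (Fin N) ℝ)
    (hV0 : V 0 = lam • (1 : Matrix (Fin N) (Fin N) ℝ))
    (hV : ∀ i, V (i + 1) = V i + Matrix.vecMulVec (x i) (x i)) :
    ∑ i ∈ Finset.range t, min 1 (x i ⬝ᵥ ((V i)⁻¹ *ᵥ x i)) ≤
      2 * Real.log ((V t).det / (lam • (1 : Matrix (Fin N) (Fin N) ℝ)).det) := by
  have hpos := posDef_of_add_vecMulVec_self hV (hV0 ▸ PosDef.one.smul hlam)
  have hq (i : ℕ) : 0 ≤ x i ⬝ᵥ ((V i)⁻¹ *ᵥ x i) := by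
    simpa using (hpos i).inv.posSemidef.dotProduct_mulVec_nonneg (x i)
  rw [← hV0, det_eq_mul_prod_of_add_vecMulVec hV (fun i ↦ (hpos i).det_pos.ne'.isUnit),
    mul_div_cancel_left₀ _ (hpos 0).det_pos.ne',
    Real.log_prod fun i _ ↦ by linarith [hq i], Finset.mul_sum]
  exact Finset.sum_le_sum fun i _ ↦ min_one_le_two_mul_log_one_add (hq i)
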